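/- There exist LimSup-automata A and B over alphabet {a,b} such that trace inclusion A_sup(w) ≤ B_sup(w) holds for all infinite words w, but A is not strategically dominated by B: there exists a resolver f of A such that for every resolver g of B there is a word w with A^f(w) > B^g(w). Concretely, take A deterministic with a single state and all transitions of weight 1, and B which from its initial state nondeterministically moves on any letter to state q1 or q2; from q1, letter a leads to an accepting sink (self-loop weight 1) and letter b to a rejecting sink (self-loop weight 0), while from q2 letter b leads to the accepting sink and a to the rejecting sink. -/

import Mathlib

open Filter

/-- A quantitative automaton over alphabet `σ` with state type `Q`:
initial state, transition relation (required total), and transition weights. -/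
structure QAut (σ : Type) (Q : Type) where
  init : Q
  Δ : Q → σ → Q → Prop
  total : ∀ q a, ∃ q', Δ q a q'
  μ : Q → σ → Q → ℕ

namespace QAut

variable {σ Q : Type}

/-- The last state of a history (a finite sequence of (letter, state) steps from the
initial state). -/
def hlast (A : QAut σ Q) (h : List (σ × Q)) : Q :=
  (h.getLast?.map Prod.snd).getD A.init

/-- A resolver: maps each history and next letter to a successor state consistent with Δ. -/
structure Resolver (A : QAut σ Q) where
  f : List (σ × Q) → σ → Q
  consistent : ∀ h a, A.Δ (A.hlast h) a (f h a)

/-- The history produced by a resolver on the first `n` letters of a word. -/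
def Resolver.hist {A : QAut σ Q} (r : Resolver A) (w : ℕ → σ) : ℕ → List (σ × Q)
  | 0 => []
  | n + 1 => r.hist w n ++ [(w n, r.f (r.hist w n) (w n))]

/-- The unique run induced by a resolver on a word. -/
def Resolver.run {A : QAut σ Q} (r : Resolver A) (w : ℕ → σ) : ℕ → Q
  | 0 => A.init
  | n + 1 => r.f (r.hist w n) (w n)

/-- The weight sequence of the run induced by a resolver on a word. -/
def Resolver.wt {A : QAut σ Q} (r : Resolver A) (w : ℕ → σ) (n : ℕ) : ℕ :=
  A.μ (r.run w n) (w n) (r.run w (n + 1))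

/-- `A^f(w)`: the value (under value function `ν`) of the run induced by resolver `f` on `w`. -/
noncomputable def val (A : QAut σ Q) (ν : (ℕ → ℕ) → ℝ) (r : Resolver A) (w : ℕ → σ) : ℝ :=
  ν (r.wt w)

/-- `A_sup(w)`: the supremum over all resolvers of `A^f(w)`. -/
noncomputable def supVal (A : QAut σ Q) (ν : (ℕ → ℕ) → ℝ) (w : ℕ → σ) : ℝ :=
  ⨆ r : Resolver A, A.val ν r w

end QAut

/-- The `Inf` value function. -/
noncomputable def vInf (x : ℕ → ℕ) : ℝ := ⨅ n, (x n : ℝ)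

/-- The `Sup` value function. -/
noncomputable def vSup (x : ℕ → ℕ) : ℝ := ⨆ n, (x n : ℝ)

/-- The `LimSup` value function. -/
noncomputable def vLimSup (x : ℕ → ℕ) : ℝ := Filter.limsup (fun n => (x n : ℝ)) Filter.atTop

/-- The `LimInf` value function. -/
noncomputable def vLimInf (x : ℕ → ℕ) : ℝ := Filter.liminf (fun n => (x n : ℝ)) Filter.atTop

/-- `ν ∈ {Inf, Sup, LimSup, LimInf}`. -/
def IsClassic (ν : (ℕ → ℕ) → ℝ) : Prop :=
  ν = vInf ∨ ν = vSup ∨ ν = vLimSup ∨ ν = vLimInf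

/-- The deterministic one-state LimSup-automaton `A` over `{a, b}` with all
transitions of weight 1 (letters: `a = true`, `b = false`). -/
def AutA4 : QAut Bool Unit where
  init := ()
  Δ := fun _ _ _ => True
  total := fun _ _ => ⟨(), trivial⟩
  μ := fun _ _ _ => 1

/-- States of `B`: from `q0`, any letter nondeterministically moves to `q1` or `q2`;
from `q1`, `a` leads to the accepting sink `top` (self-loop weight 1) and `b` to the
rejecting sink `bot` (self-loop weight 0); from `q2`, `b` leads to `top` and `a` to
`bot`. -/
inductive SB4 where
  | q0 | q1 | q2 | top | bot
  deriving DecidableEq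

instance instFintypeSB4 : Fintype SB4 where
  elems := {.q0, .q1, .q2, .top, .bot}
  complete := by intro x; cases x <;> simp

/-- Successor lists of `B` (letters: `a = true`, `b = false`). -/
def B4next : SB4 → Bool → List SB4
  | .q0, _ => [.q1, .q2]
  | .q1, true => [.top]
  | .q1, false => [.bot]
  | .q2, true => [.bot]
  | .q2, false => [.top]
  | .top, _ => [.top]
  | .bot, _ => [.bot]

/-- The concrete LimSup-automaton `B`. -/
def AutB4 : QAut Bool SB4 where
  init := .q0
  Δ := fun q a q' => q' ∈ B4next q a
  total := by decide
  μ := fun q _ q' => if q = SB4.top ∧ q' = SB4.top then 1 else 0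


section Aux

open QAut

lemma hlast_hist {σ Q : Type} {A : QAut σ Q} (r : A.Resolver) (w : ℕ → σ) (n : ℕ) :
    A.hlast (r.hist w n) = r.run w n := by
  cases n with
  | zero => rfl
  | succ n =>
    simp [Resolver.hist, Resolver.run, QAut.hlast, List.getLast?_concat]

lemma run_step {σ Q : Type} {A : QAut σ Q} (r : A.Resolver) (w : ℕ → σ) (n : ℕ) :
    A.Δ (r.run w n) (w n) (r.run w (n + 1)) := by
  rw [← hlast_hist]; exact r.consistent _ _

lemma vLimSup_const (c : ℕ) : vLimSup (fun _ => c) = c := by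
  simp [vLimSup]

lemma vLimSup_eventually_one {x : ℕ → ℕ} (h : ∀ᶠ n in atTop, x n = 1) :
    vLimSup x = 1 := by
  have : Filter.limsup (fun n => ((x n : ℝ))) atTop
      = Filter.limsup (fun _ : ℕ => (1 : ℝ)) atTop := by
    apply Filter.limsup_congr
    filter_upwards [h] with n hn
    simp [hn]
  simpa [vLimSup, Filter.limsup_const] using this

lemma vLimSup_le_one {x : ℕ → ℕ} (h : ∀ n, x n ≤ 1) : vLimSup x ≤ 1 := by
  apply Filter.limsup_le_of_le
  · exact (Filter.isBoundedUnder_of ⟨0, fun n => Nat.cast_nonneg (x n)⟩).isCoboundedUnder_le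
  · filter_upwards with n
    exact_mod_cast h n

/-- A resolver of B along the word `w` built from a choice at q0. -/
def Bpick (c : SB4) : SB4 → Bool → SB4
  | .q0, _ => c
  | .q1, true => .top
  | .q1, false => .bot
  | .q2, true => .bot
  | .q2, false => .top
  | .top, _ => .top
  | .bot, _ => .bot

lemma Bpick_consistent (c : SB4) (hc : c = SB4.q1 ∨ c = SB4.q2) (q : SB4) (a : Bool) :
    AutB4.Δ q a (Bpick c q a) := by
  rcases hc with h | h <;> subst h <;> cases q <;> cases a <;> simp [AutB4, Bpick, B4next]

/-- weight of A is always 1 -/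
lemma AutA4_wt (r : AutA4.Resolver) (w : ℕ → Bool) (n : ℕ) : r.wt w n = 1 := rfl

lemma AutA4_val (r : AutA4.Resolver) (w : ℕ → Bool) : AutA4.val vLimSup r w = 1 := by
  have : r.wt w = fun _ => 1 := funext fun n => AutA4_wt r w n
  rw [QAut.val, this]
  simpa using vLimSup_const 1

instance : Nonempty AutA4.Resolver := ⟨⟨fun _ _ => (), fun _ _ => trivial⟩⟩

end Aux

/-- Trace inclusion holds between the concrete LimSup-automata `A`
and `B`, yet `A` is not strategically dominated by `B`: some resolver `f` of `A` is
such that every resolver `g` of `B` loses on some word. -/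
theorem inclusion_not_strategic_dominance :
    (∀ w : ℕ → Bool, AutA4.supVal vLimSup w ≤ AutB4.supVal vLimSup w) ∧
      (∃ f : AutA4.Resolver, ∀ g : AutB4.Resolver, ∃ w : ℕ → Bool,
        AutB4.val vLimSup g w < AutA4.val vLimSup f w) := by
  constructor
  · intro w
    -- A's sup value is 1
    have hA : AutA4.supVal vLimSup w = 1 := by
      rw [QAut.supVal]
      have : (fun r : AutA4.Resolver => AutA4.val vLimSup r w) = fun _ => (1 : ℝ) :=
        funext fun r => AutA4_val r w
      rw [this, ciSup_const]
    rw [hA]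
    -- build a resolver of B achieving 1 on w
    set c : SB4 := if w 1 then SB4.q1 else SB4.q2 with hc
    have hcc : c = SB4.q1 ∨ c = SB4.q2 := by
      by_cases h : w 1 <;> simp [hc, h]
    let g : AutB4.Resolver :=
      ⟨fun h a => Bpick c (AutB4.hlast h) a, fun h a => Bpick_consistent c hcc _ a⟩
    have hrun : ∀ n, g.run w (n + 2) = SB4.top := by
      intro n
      induction n with
      | zero =>
        have h1 : g.run w 1 = c := by
          show Bpick c (AutB4.hlast (g.hist w 0)) (w 0) = c
          rw [hlast_hist]
          rcases hcc with h | h <;> cases hw0 : w 0 <;>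
            simp [QAut.Resolver.run, AutB4, Bpick]
        show Bpick c (AutB4.hlast (g.hist w 1)) (w 1) = SB4.top
        rw [hlast_hist, h1]
        by_cases h : w 1 <;> simp [hc, h, Bpick]
      | succ n ih =>
        show Bpick c (AutB4.hlast (g.hist w (n + 2))) (w (n + 2)) = SB4.top
        rw [hlast_hist, ih]
        cases w (n + 2) <;> simp [Bpick]
    have hwt : ∀ᶠ n in atTop, g.wt w n = 1 := by
      filter_upwards [Filter.eventually_ge_atTop 2] with n hn
      obtain ⟨m, rfl⟩ : ∃ m, n = m + 2 := ⟨n - 2, by omega⟩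
      rw [QAut.Resolver.wt]
      have h1 := hrun m
      have h2 := hrun (m + 1)
      rw [h1, show m + 2 + 1 = (m + 1) + 2 from rfl, h2]
      simp [AutB4]
    have hval : AutB4.val vLimSup g w = 1 := vLimSup_eventually_one hwt
    rw [← hval, QAut.supVal]
    apply le_ciSup (f := fun r : AutB4.Resolver => AutB4.val vLimSup r w)
    · refine ⟨1, ?_⟩
      rintro x ⟨r, rfl⟩
      exact vLimSup_le_one (fun n => by
        rw [QAut.Resolver.wt]
        dsimp [AutB4]
        split <;> omega)
  · refine ⟨⟨fun _ _ => (), fun _ _ => trivial⟩, fun g => ?_⟩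
    classical
    set s : SB4 := g.f [] true with hs
    set w : ℕ → Bool := fun n => if n = 1 then (if s = SB4.q1 then false else true) else true
      with hw
    refine ⟨w, ?_⟩
    have hval1 : AutA4.val vLimSup ⟨fun _ _ => (), fun _ _ => trivial⟩ w = 1 :=
      AutA4_val _ w
    rw [hval1]
    -- analyze run of g on w
    have h1 : g.run w 1 = s := by
      show g.f (g.hist w 0) (w 0) = s
      simp [QAut.Resolver.hist, hw, hs]
    have hs12 : s = SB4.q1 ∨ s = SB4.q2 := by
      have := run_step g w 0
      rw [h1] at this
      have h0 : g.run w 0 = SB4.q0 := rfl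
      rw [h0] at this
      simpa [AutB4, B4next] using this
    have h2 : g.run w 2 = SB4.bot := by
      have := run_step g w 1
      rw [h1] at this
      rcases hs12 with h | h <;> rw [h] at this <;>
        simpa [AutB4, B4next, hw, h] using this
    have hrun : ∀ n, g.run w (n + 2) = SB4.bot := by
      intro n
      induction n with
      | zero => exact h2
      | succ n ih =>
        have := run_step g w (n + 2)
        rw [ih] at this
        simpa [AutB4, B4next] using this
    have hnot : ∀ n, g.run w n ≠ SB4.top := by
      intro n
      match n with
      | 0 => simp [show g.run w 0 = SB4.q0 from rfl]
      | 1 => rw [h1]; rcases hs12 with h | h <;> simp [h]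
      | (m + 2) => rw [hrun m]; simp
    have hwt : g.wt w = fun _ => 0 := by
      funext n
      rw [QAut.Resolver.wt]
      have := hnot n
      simp only [AutB4]
      rw [if_neg]
      exact fun h => this h.1
    have : AutB4.val vLimSup g w = 0 := by
      rw [QAut.val, hwt]
      simpa using vLimSup_const 0
    rw [this]; norm_num
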